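/- arXiv:0911.0625 — 2 statements merged into one kernel-verified Lean document; each statement's English description precedes it below -/
import Mathlib

section
/- Let D be a G-invariant divisor on X. Then the subsheaf π_*^G(O_X(D)) of G-invariants of the direct image π_*(O_X(D)) and the sheaf O_Y(⌊π_*(D)/n⌋) are equal as subsheaves of the constant sheaf K(Y) on Y. In particular, π_*^G(O_X(D)) is an invertible O_Y-module. -/
/-- A divisor on a curve is modelled as a finitely supported `ℤ`-valued function on the
set of (closed) points.  `divPush π D` is the push-forward divisor `π₊(D)`. -/
noncomputable def divPush {X Y : Type*} (π : X → Y) (D : X →₀ ℤ) : Y →₀ ℤ :=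
  Finsupp.mapDomain π D

/-- `divFloor D n` is the divisor `⌊D/n⌋` obtained from `D` by replacing each
coefficient `m` by its integral part `⌊m/n⌋`. -/
noncomputable def divFloor {Y : Type*} (D : Y →₀ ℤ) (n : ℕ) : Y →₀ ℤ :=
  D.mapRange (fun m => Int.fdiv m n) (Int.zero_fdiv n)

private lemma fdiv_neg_le_iff (m v c : ℤ) (hc : 0 < c) : -(m.fdiv c) ≤ v ↔ -m ≤ c * v := by
  rw [Int.fdiv_eq_ediv_of_nonneg _ hc.le, neg_le, Int.le_ediv_iff_mul_le hc, neg_mul, neg_le, mul_comm]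

/-!
Setting: `X` is a connected smooth projective curve over an algebraically closed field `k`
with a faithful action of a finite group `G` of order `n`; `Y = X/G` is the quotient curve
with projection `π : X → Y`.  Points are modelled by types, fibres of `π` are the
`G`-orbits, and the ramification index `e P` is the order of the stabilizer of `P`.
`FX = K(X)` and `FY = K(Y)` are the function fields; `G` acts on `FX` with fixed field
`K(Y)`, embedded via `ι : FY →+* FX`; `ordX P` and `ordY Q` are the normalized valuations
at the points `P ∈ X`, `Q ∈ Y`, so that `ordX P (ι f) = e P * ordY (π P) f` and every
nonzero function has only finitely many zeroes and poles.

For a `G`-invariant divisor `D` on `X`, a subsheaf of the constant sheaf `K(Y)` on `Y` is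
described by its sections over the open subsets `V ⊆ Y`:
* the sections of `π_*^G(O_X(D))` over `V` are
  `{f ∈ K(Y) | ord_P(ι f) ≥ -D(P) for all P ∈ π⁻¹(V)}`
  (indeed `O_X(D)(π⁻¹ V)^G = O_X(D)(π⁻¹ V) ∩ K(Y)` inside `K(X)`), and
* the sections of `O_Y(E)` over `V` are `{f ∈ K(Y) | ord_Q(f) ≥ -E(Q) for all Q ∈ V}`.

Statement (Lemma): the sheaves `π_*^G(O_X(D))` and `O_Y(⌊π₊(D)/n⌋)` are equal as
subsheaves of the constant sheaf `K(Y)`, i.e. they have the same sections over every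
`V ⊆ Y`; in particular `π_*^G(O_X(D))` is an invertible `O_Y`-module (it is the sheaf
`O_Y(E)` associated to a divisor `E` on `Y`).
-/
theorem equivariant_pushforward_eq_floor
    {k : Type} [Field k] [IsAlgClosed k]
    {G : Type} [Group G] [Fintype G]
    {X Y : Type} [MulAction G X] [FaithfulSMul G X]
    (π : X → Y) (hπsurj : Function.Surjective π)
    (hfib : ∀ x x' : X, π x = π x' ↔ ∃ g : G, g • x = x')
    (e : X → ℕ) (he : ∀ x : X, e x = Nat.card (MulAction.stabilizer G x))
    {FX FY : Type} [Field FX] [Field FY] [Algebra k FX] [Algebra k FY]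
    [MulSemiringAction G FX]
    (ι : FY →+* FX)
    -- `K(Y) = K(X)^G`:
    (hfix : ∀ a : FX, (∀ g : G, g • a = a) ↔ ∃ b : FY, ι b = a)
    (ordX : X → FX → ℤ) (ordY : Y → FY → ℤ)
    (hord : ∀ (P : X) (f : FY), f ≠ 0 → ordX P (ι f) = (e P : ℤ) * ordY (π P) f)
    (hordfin : ∀ a : FX, a ≠ 0 → {P : X | ordX P a ≠ 0}.Finite)
    -- `D` is a `G`-invariant divisor on `X`:
    (D : X →₀ ℤ) (hD : ∀ (g : G) (x : X), D (g • x) = D x) :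
    (∀ V : Set Y,
      {f : FY | ∀ P : X, π P ∈ V → f ≠ 0 → -(D P) ≤ ordX P (ι f)} =
        {f : FY | ∀ Q ∈ V, f ≠ 0 →
          -((divFloor (divPush π D) (Fintype.card G)) Q) ≤ ordY Q f}) ∧
    (∃ E : Y →₀ ℤ, ∀ V : Set Y,
      {f : FY | ∀ P : X, π P ∈ V → f ≠ 0 → -(D P) ≤ ordX P (ι f)} =
        {f : FY | ∀ Q ∈ V, f ≠ 0 → -(E Q) ≤ ordY Q f}) := by
  classical
  have key : ∀ P : X, 0 < e P ∧
      (divFloor (divPush π D) (Fintype.card G)) (π P) = (D P).fdiv (e P) := by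
    intro P
    have hepos : 0 < e P := by
      rw [he]; exact Nat.card_pos
    refine ⟨hepos, ?_⟩
    set oP : Finset X := Finset.univ.image (fun g : G => g • P) with hoP
    have hmem : ∀ a, a ∈ oP ↔ ∃ g : G, g • P = a := by
      intro a; simp [hoP]
    have hpush : divPush π D (π P) = (oP.card : ℤ) * D P := by
      have h1 : divPush π D (π P)
          = ∑ a ∈ D.support, if π a = π P then D a else 0 := by
        rw [divPush, Finsupp.mapDomain, Finsupp.sum_apply, Finsupp.sum]
        refine Finset.sum_congr rfl fun a _ => ?_
        rw [Finsupp.single_apply]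
      rw [h1, ← Finset.sum_filter]
      have hsub : D.support.filter (fun a => π a = π P) ⊆ oP := by
        intro a ha
        rw [Finset.mem_filter] at ha
        rcases (hfib P a).mp ha.2.symm with ⟨g, hg⟩
        exact (hmem a).mpr ⟨g, hg⟩
      rw [Finset.sum_subset hsub (fun a haoP haS => ?_)]
      · have hconst : ∀ a ∈ oP, D a = D P := by
          intro a ha
          rcases (hmem a).mp ha with ⟨g, hg⟩
          rw [← hg, hD]
        rw [Finset.sum_congr rfl hconst, Finset.sum_const, nsmul_eq_mul]
      · rcases (hmem a).mp haoP with ⟨g, hg⟩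
        have hπa : π a = π P := ((hfib P a).mpr ⟨g, hg⟩).symm
        by_contra hne
        exact haS (Finset.mem_filter.mpr ⟨Finsupp.mem_support_iff.mpr hne, hπa⟩)
    have hcard : oP.card * e P = Fintype.card G := by
      haveI : Fintype ↑(MulAction.orbit G P) := Set.fintypeRange _
      have horb : (MulAction.orbit G P).toFinset = oP := by
        ext a
        simp only [Set.mem_toFinset, MulAction.mem_orbit_iff, hmem]
      have h2 := MulAction.card_orbit_mul_card_stabilizer_eq_card_group G P
      have hc1 : Fintype.card ↑(MulAction.orbit G P) = oP.card := by
        rw [← Set.toFinset_card, horb]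
      rw [← hc1, ← h2, he, Nat.card_eq_fintype_card]
    have hopos : 0 < oP.card := by
      rw [Finset.card_pos]
      exact ⟨(1 : G) • P, (hmem _).mpr ⟨1, rfl⟩⟩
    rw [divFloor, Finsupp.mapRange_apply, hpush, ← hcard]
    push_cast
    rw [Int.fdiv_eq_ediv_of_nonneg _ (by positivity), Int.fdiv_eq_ediv_of_nonneg _ (by exact_mod_cast hepos.le),
      Int.mul_ediv_mul_of_pos _ _ (by exact_mod_cast hopos)]
  have main : ∀ V : Set Y,
      {f : FY | ∀ P : X, π P ∈ V → f ≠ 0 → -(D P) ≤ ordX P (ι f)} =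
        {f : FY | ∀ Q ∈ V, f ≠ 0 →
          -((divFloor (divPush π D) (Fintype.card G)) Q) ≤ ordY Q f} := by
    intro V
    ext f
    simp only [Set.mem_setOf_eq]
    constructor
    · intro h Q hQ hf
      obtain ⟨P, rfl⟩ := hπsurj Q
      have h1 := h P hQ hf
      rw [hord P f hf] at h1
      obtain ⟨hepos, hfl⟩ := key P
      rw [hfl]
      exact (fdiv_neg_le_iff _ _ _ (by exact_mod_cast hepos)).mpr h1
    · intro h P hP hf
      have h1 := h (π P) hP hf
      obtain ⟨hepos, hfl⟩ := key P
      rw [hfl] at h1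
      rw [hord P f hf]
      exact (fdiv_neg_le_iff _ _ _ (by exact_mod_cast hepos)).mp h1
  exact ⟨main, ⟨_, main⟩⟩
end

section
/- Let D be a G-invariant divisor on X, let Q ∈ Y, let P ∈ π^{-1}(Q), let n_P be the coefficient of D at P and e_P the ramification index of π at P. Then the stalk at Q of the G-invariant direct image π_*^G(O_X(D)) equals {f ∈ K(Y) : ord_Q(f) ≥ -⌊n_P/e_P⌋}, where ord_Q is the valuation of K(Y) at Q. -/
/-!
Setting: `X` is a connected smooth projective curve over an algebraically closed field `k`
with a faithful action of a finite group `G` of order `n`; `Y = X/G` is the quotient curve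
with projection `π : X → Y`.  Points are modelled by types, fibres of `π` are the
`G`-orbits, and the ramification index `e P` is the order of the stabilizer of `P`.
`FX = K(X)` and `FY = K(Y)` are the function fields; `G` acts on `FX` with fixed field
`K(Y)` embedded via `ι : FY →+* FX`; `ordX P` and `ordY Q` are the normalized valuations
at the points, so that `ordX P (ι f) = e P * ordY (π P) f` and every nonzero function has
only finitely many zeroes and poles.

For a `G`-invariant divisor `D` on `X`, the subsheaf `π_*^G(O_X(D))` of the constant
sheaf `K(Y)` has sections over an open `V ⊆ Y` given by
`{f ∈ K(Y) | ord_P(ι f) ≥ -D(P) for all P ∈ π⁻¹(V)}`.  Since the nonempty open subsets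
of the curve `Y` are exactly the complements of the finite sets `S` of closed points, the
stalk at `Q ∈ Y` is the union of the sections over the sets `Sᶜ` with `S` finite and
`Q ∉ S`.

Statement: for `Q ∈ Y` and `P ∈ π⁻¹(Q)`, the stalk of `π_*^G(O_X(D))` at `Q` equals
`{f ∈ K(Y) : ord_Q(f) ≥ -⌊n_P/e_P⌋}`, where `n_P = D(P)`.
-/
lemma key_iff {n v : ℤ} {e : ℤ} (he : 0 < e) : -n ≤ e * v ↔ -(Int.fdiv n e) ≤ v := by
  have h1 : -v ≤ n / e ↔ -v * e ≤ n := Int.le_ediv_iff_mul_le he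
  rw [Int.fdiv_eq_ediv_of_nonneg _ he.le]
  constructor
  · intro h; rw [neg_le]; exact h1.mpr (by linarith [mul_comm e v])
  · intro h; have := h1.mp (neg_le.mp h); linarith [mul_comm e v]

theorem stalk_equivariant_pushforward
    {k : Type} [Field k] [IsAlgClosed k]
    {G : Type} [Group G] [Fintype G]
    {X Y : Type} [MulAction G X] [FaithfulSMul G X]
    (π : X → Y) (hπsurj : Function.Surjective π)
    (hfib : ∀ x x' : X, π x = π x' ↔ ∃ g : G, g • x = x')
    (e : X → ℕ) (he : ∀ x : X, e x = Nat.card (MulAction.stabilizer G x))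
    {FX FY : Type} [Field FX] [Field FY] [Algebra k FX] [Algebra k FY]
    [MulSemiringAction G FX]
    (ι : FY →+* FX)
    -- `K(Y) = K(X)^G`:
    (hfix : ∀ a : FX, (∀ g : G, g • a = a) ↔ ∃ b : FY, ι b = a)
    (ordX : X → FX → ℤ) (ordY : Y → FY → ℤ)
    (hord : ∀ (P : X) (f : FY), f ≠ 0 → ordX P (ι f) = (e P : ℤ) * ordY (π P) f)
    (hordfin : ∀ a : FX, a ≠ 0 → {P : X | ordX P a ≠ 0}.Finite)
    -- `D` is a `G`-invariant divisor on `X`: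
    (D : X →₀ ℤ) (hD : ∀ (g : G) (x : X), D (g • x) = D x)
    (Q : Y) (P : X) (hPQ : π P = Q) :
    {f : FY | ∃ S : Finset Y, Q ∉ S ∧
        ∀ P' : X, π P' ∉ S → f ≠ 0 → -(D P') ≤ ordX P' (ι f)} =
      {f : FY | f ≠ 0 → -(Int.fdiv (D P) (e P)) ≤ ordY Q f} := by
  have epos : ∀ x : X, 0 < ((e x : ℤ)) := by
    intro x
    rw [he x]
    exact_mod_cast Nat.card_pos
  classical
  ext f
  simp only [Set.mem_setOf_eq]
  constructor
  · rintro ⟨S, hQS, hS⟩ hf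
    have h := hS P (by rw [hPQ]; exact hQS) hf
    rw [hord P f hf, hPQ] at h
    exact (key_iff (epos P)).mp h
  · intro hf
    by_cases hf0 : f = 0
    · exact ⟨∅, Finset.notMem_empty _, fun P' _ hne => absurd hf0 hne⟩
    have hv := hf hf0
    have ha : ι f ≠ 0 := fun h => hf0 (ι.injective (by rw [h, map_zero]))
    have hfin : ({P' : X | ordX P' (ι f) ≠ 0} ∪ ↑D.support).Finite :=
      (hordfin _ ha).union (D.support : Set X).toFinite
    have him := hfin.image π
    refine ⟨him.toFinset.erase Q, Finset.notMem_erase _ _, fun P' hP' hne => ?_⟩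
    by_cases hPQ' : π P' = Q
    · obtain ⟨g, hg⟩ := (hfib P' P).mp (hPQ'.trans hPQ.symm)
      have hDp : D P' = D P := by rw [← hg, hD]
      have hep : e P' = e P := by
        rw [he, he]
        exact (Nat.card_congr
          (MulAction.stabilizerEquivStabilizerOfOrbitRel
            (⟨g, hg⟩ : MulAction.orbitRel G X P P')).toEquiv).symm
      rw [hord P' f hne, hPQ', hDp, hep]
      exact (key_iff (epos P)).mpr hv
    · have h1 : ordX P' (ι f) = 0 := by
        by_contra h
        exact hP' (Finset.mem_erase.mpr ⟨hPQ', him.mem_toFinset.mpr ⟨P', Or.inl h, rfl⟩⟩)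
      have h2 : D P' = 0 := by
        by_contra h
        exact hP' (Finset.mem_erase.mpr
          ⟨hPQ', him.mem_toFinset.mpr ⟨P', Or.inr (Finsupp.mem_support_iff.mpr h), rfl⟩⟩)
      rw [h1, h2]; simp
end
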